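/- arXiv:0911.2256 — 2 statements merged into one kernel-verified Lean document; each statement's English description precedes it below -/
import Mathlib

section
/- Let m ≥ 2 and r > 0. There exists a constant C > 0 (depending only on m and r) such that for every real polynomial f(x) = a₂x² + a₃x³ + ⋯ + a_m x^m with f''(x) ≥ 0 for all x ∈ [0, r], one has f(x) ≥ C(|a₂|x² + |a₃|x³ + ⋯ + |a_m|x^m) for all x ∈ [0, r]. -/
open Complex Metric Set Filter Asymptotics

noncomputable section

/-- Subharmonicity via continuity and the sub-mean-value property on circles. -/
def SubharmonicOn (u : ℂ → ℝ) (s : Set ℂ) : Prop :=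
  ContinuousOn u s ∧ ∀ z : ℂ, ∀ r : ℝ, 0 < r → closedBall z r ⊆ s →
    u z ≤ (2 * Real.pi)⁻¹ *
      ∫ θ in (0:ℝ)..(2 * Real.pi), u (z + (r : ℂ) * Complex.exp (θ * Complex.I))

/-- The mixed Wirtinger derivative ∂²u/∂z∂z̄ = (1/4)Δu of a real-valued function on ℂ. -/
def mixedDeriv (u : ℂ → ℝ) (z : ℂ) : ℝ :=
  (1 / 4) * (fderiv ℝ (fun w => fderiv ℝ u w 1) z 1 +
             fderiv ℝ (fun w => fderiv ℝ u w Complex.I) z Complex.I)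

/-- The Levi form Σᵢⱼ ∂²u/∂zᵢ∂z̄ⱼ(P) ξᵢ ξ̄ⱼ, computed along the complex line P + tξ. -/
def leviForm {n : ℕ} (u : (Fin n → ℂ) → ℝ) (P ξ : Fin n → ℂ) : ℝ :=
  mixedDeriv (fun t => u (P + t • ξ)) 0

/-- Plurisubharmonicity: subharmonic along every complex line. -/
def PSHOn {n : ℕ} (u : (Fin n → ℂ) → ℝ) (s : Set (Fin n → ℂ)) : Prop :=
  ∀ a b : Fin n → ℂ, SubharmonicOn (fun t => u (a + t • b)) {t : ℂ | a + t • b ∈ s}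

/-- `log u` plurisubharmonic, via the standard characterization: `u ≥ 0` and
`u·|e^{L}|` is plurisubharmonic for every complex-linear functional `L`. -/
def LogPSHOn {n : ℕ} (u : (Fin n → ℂ) → ℝ) (s : Set (Fin n → ℂ)) : Prop :=
  (∀ z ∈ s, 0 ≤ u z) ∧
  ∀ L : (Fin n → ℂ) →ₗ[ℂ] ℂ,
    PSHOn (fun z => u z * ‖Complex.exp (L z)‖) s

/-- `log u` subharmonic on a planar set, via the analogous characterization. -/
def LogSubharmonicOn (u : ℂ → ℝ) (s : Set ℂ) : Prop :=
  (∀ z ∈ s, 0 ≤ u z) ∧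
  ∀ α : ℂ, SubharmonicOn (fun z => u z * ‖Complex.exp (α * z)‖) s

/-- Candidate functions for the Sibony metric at `P`. -/
def SibonyCandidate {n : ℕ} (Ω : Set (Fin n → ℂ)) (P : Fin n → ℂ)
    (u : (Fin n → ℂ) → ℝ) : Prop :=
  ContDiffAt ℝ 2 u P ∧ u P = 0 ∧ (∀ z ∈ Ω, 0 ≤ u z ∧ u z ≤ 1) ∧ LogPSHOn u Ω

/-- The Sibony metric. -/
def sibonyMetric {n : ℕ} (Ω : Set (Fin n → ℂ)) (P ξ : Fin n → ℂ) : ℝ :=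
  sSup {x : ℝ | ∃ u, SibonyCandidate Ω P u ∧ x = Real.sqrt (leviForm u P ξ)}

/-- The Carathéodory metric. -/
def caratheodoryMetric {n : ℕ} (Ω : Set (Fin n → ℂ)) (P ξ : Fin n → ℂ) : ℝ :=
  sSup {x : ℝ | ∃ f : (Fin n → ℂ) → ℂ, DifferentiableOn ℂ f Ω ∧
    (∀ z ∈ Ω, ‖f z‖ < 1) ∧ f P = 0 ∧ x = ‖fderiv ℂ f P ξ‖}

/-- The Kobayashi metric. -/
def kobayashiMetric {n : ℕ} (Ω : Set (Fin n → ℂ)) (P ξ : Fin n → ℂ) : ℝ :=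
  sInf {α : ℝ | 0 < α ∧ ∃ φ : ℂ → (Fin n → ℂ), DifferentiableOn ℂ φ (ball 0 1) ∧
    (∀ z ∈ ball (0:ℂ) 1, φ z ∈ Ω) ∧ φ 0 = P ∧ fderiv ℂ φ 0 1 = α⁻¹ • ξ}

/-! Since `f(0) = f'(0) = 0`, convexity of `f` on `[0, r]` only serves to make `f` monotone
there. For such `f` and `x ∈ [0, r]` put `N = ∑ |aₖ| xᵏ`: the coefficients `bₖ = aₖ xᵏ / N` have
ℓ¹-norm one, and their polynomial `t ↦ f(t x) / N` is monotone on `[0, 1]` with value `f(x) / N`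
at `1`. Such coefficient vectors form a compact set on which `b ↦ ∑ bₖ` is continuous and
positive (a polynomial monotone on `[0, 1]` and vanishing at `0` and `1` vanishes on `[0, 1]`,
hence identically), so it is bounded below by some `C > 0`, which does not even depend on `r`. -/

theorem monotoneOn_Icc_of_deriv_eq_zero_of_deriv2_nonneg {f : ℝ → ℝ} {a b : ℝ}
    (hf : Differentiable ℝ f) (hf' : Differentiable ℝ (deriv f)) (ha : deriv f a = 0)
    (h2 : ∀ x ∈ Icc a b, 0 ≤ deriv (deriv f) x) : MonotoneOn f (Icc a b) := by
  have hmono : MonotoneOn (deriv f) (Icc a b) :=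
    monotoneOn_of_deriv_nonneg (convex_Icc a b) hf'.continuous.continuousOn
      hf'.differentiableOn fun x hx => h2 x (interior_subset hx)
  refine monotoneOn_of_deriv_nonneg (convex_Icc a b) hf.continuous.continuousOn
    hf.differentiableOn fun x hx => ?_
  have hx := interior_subset hx
  exact ha ▸ hmono (left_mem_Icc.2 (hx.1.trans hx.2)) hx hx.1

section SumMulPow

variable {s : Finset ℕ}

theorem deriv_sum_mul_pow (a : ℕ → ℝ) :
    deriv (fun y : ℝ => ∑ k ∈ s, a k * y ^ k) = fun x => ∑ k ∈ s, a k * (k * x ^ (k - 1)) :=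
  funext fun x => (HasDerivAt.fun_sum fun k _ => (hasDerivAt_pow k x).const_mul (a k)).deriv

theorem monotoneOn_sum_mul_pow_of_deriv2_nonneg (hs : ∀ k ∈ s, 2 ≤ k) {a : ℕ → ℝ} {r : ℝ}
    (h2 : ∀ x ∈ Icc 0 r, 0 ≤ deriv (deriv (fun y : ℝ => ∑ k ∈ s, a k * y ^ k)) x) :
    MonotoneOn (fun y : ℝ => ∑ k ∈ s, a k * y ^ k) (Icc 0 r) := by
  refine monotoneOn_Icc_of_deriv_eq_zero_of_deriv2_nonneg (by fun_prop) ?_ ?_ h2 <;>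
    rw [deriv_sum_mul_pow]
  · fun_prop
  · exact Finset.sum_eq_zero fun k hk => by rw [zero_pow (by have := hs k hk; omega)]; simp

theorem sum_mul_zero_pow (hs : 0 ∉ s) (a : ℕ → ℝ) : ∑ k ∈ s, a k * (0 : ℝ) ^ k = 0 :=
  Finset.sum_eq_zero fun k hk => by rw [zero_pow (ne_of_mem_of_not_mem hk hs), mul_zero]

open Polynomial in
theorem eq_zero_of_sum_mul_pow_eq_zero {b : ℕ → ℝ} {S : Set ℝ} (hS : S.Infinite)
    (h : ∀ t ∈ S, ∑ k ∈ s, b k * t ^ k = 0) : ∀ k ∈ s, b k = 0 := by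
  set p : ℝ[X] := ∑ k ∈ s, C (b k) * X ^ k
  have hp : p = 0 := p.eq_zero_of_infinite_isRoot <|
    hS.mono fun t ht => by simpa [p, eval_finsetSum] using h t ht
  intro k hk
  simpa [p, finsetSum_coeff, coeff_C_mul_X_pow, hk] using congrArg (coeff · k) hp

def monotoneUnitCoeffs (s : Finset ℕ) : Set (ℕ → ℝ) :=
  {b | (∀ k ∉ s, b k = 0) ∧ ∑ k ∈ s, |b k| = 1 ∧
    MonotoneOn (fun t : ℝ => ∑ k ∈ s, b k * t ^ k) (Icc 0 1)}

theorem isCompact_monotoneUnitCoeffs (s : Finset ℕ) : IsCompact (monotoneUnitCoeffs s) := by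
  have hsupp : IsClosed {b : ℕ → ℝ | ∀ k ∉ s, b k = 0} := by
    simp only [ofPred_forall]
    exact isClosed_iInter fun k => isClosed_iInter fun _ =>
      isClosed_eq (continuous_apply k) continuous_const
  have hnorm : IsClosed {b : ℕ → ℝ | ∑ k ∈ s, |b k| = 1} :=
    isClosed_eq (by fun_prop) continuous_const
  have hmono : IsClosed
      {b : ℕ → ℝ | MonotoneOn (fun t : ℝ => ∑ k ∈ s, b k * t ^ k) (Icc 0 1)} :=
    isClosed_monotoneOn.preimage (continuous_pi fun t => by fun_prop)
  refine (isCompact_univ_pi fun _ => isCompact_Icc (a := (-1 : ℝ)) (b := 1)).of_isClosed_subset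
    (hsupp.inter (hnorm.inter hmono)) fun b hb k _ => ?_
  by_cases hk : k ∈ s
  · exact abs_le.mp (hb.2.1 ▸ Finset.single_le_sum (fun j _ => abs_nonneg (b j)) hk)
  · simp [hb.1 k hk]

theorem sum_pos_of_mem_monotoneUnitCoeffs (hs : 0 ∉ s) {b : ℕ → ℝ}
    (hb : b ∈ monotoneUnitCoeffs s) : 0 < ∑ k ∈ s, b k := by
  obtain ⟨-, hnorm, hmono⟩ := hb
  by_contra! hle
  have hvanish : ∀ t ∈ Icc (0 : ℝ) 1, ∑ k ∈ s, b k * t ^ k = 0 := fun t ht => by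
    have h0 := hmono (left_mem_Icc.2 zero_le_one) ht ht.1
    have h1 := hmono ht (right_mem_Icc.2 zero_le_one) ht.2
    simp only [sum_mul_zero_pow hs, one_pow, mul_one] at h0 h1
    linarith
  have hcoeff := eq_zero_of_sum_mul_pow_eq_zero (Icc_infinite zero_lt_one) hvanish
  have : ∑ k ∈ s, |b k| = 0 := Finset.sum_eq_zero fun k hk => by rw [hcoeff k hk, abs_zero]
  linarith

theorem exists_pos_mul_sum_abs_le_of_monotoneOn (hs : 0 ∉ s) :
    ∃ C > 0, ∀ (a : ℕ → ℝ) (x : ℝ), 0 ≤ x →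
      MonotoneOn (fun y : ℝ => ∑ k ∈ s, a k * y ^ k) (Icc 0 x) →
      C * ∑ k ∈ s, |a k| * x ^ k ≤ ∑ k ∈ s, a k * x ^ k := by
  obtain ⟨C, hC, hCle⟩ := (isCompact_monotoneUnitCoeffs s).exists_forall_le'
    (by fun_prop : Continuous fun b : ℕ → ℝ => ∑ k ∈ s, b k).continuousOn
    fun b hb => sum_pos_of_mem_monotoneUnitCoeffs hs hb
  refine ⟨C, hC, fun a x hx hmono => ?_⟩
  set N := ∑ k ∈ s, |a k| * x ^ k
  have hfx : 0 ≤ ∑ k ∈ s, a k * x ^ k := by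
    simpa [sum_mul_zero_pow hs] using hmono (left_mem_Icc.2 hx) (right_mem_Icc.2 hx) hx
  obtain hN | hN := (show 0 ≤ N from Finset.sum_nonneg fun k _ => by positivity).eq_or_lt
  · rwa [← hN, mul_zero]
  set b : ℕ → ℝ := fun k => if k ∈ s then a k * x ^ k / N else 0
  have hb : ∀ t, ∑ k ∈ s, b k * t ^ k = (∑ k ∈ s, a k * (t * x) ^ k) / N := fun t => by
    rw [Finset.sum_div]
    refine Finset.sum_congr rfl fun k hk => ?_
    simp only [b, if_pos hk, mul_pow]
    ring
  have hbmem : b ∈ monotoneUnitCoeffs s := by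
    refine ⟨fun k hk => if_neg hk, ?_, fun t ht u hu htu => ?_⟩
    · have habs : ∀ k ∈ s, |b k| = |a k| * x ^ k / N := fun k hk => by
        simp only [b, if_pos hk, abs_div, abs_mul, abs_pow, abs_of_nonneg hx, abs_of_pos hN]
      rw [Finset.sum_congr rfl habs, ← Finset.sum_div, div_self hN.ne']
    · simp only [hb]
      refine div_le_div_of_nonneg_right (hmono ?_ ?_ (mul_le_mul_of_nonneg_right htu hx)) hN.le
      · exact ⟨mul_nonneg ht.1 hx, mul_le_of_le_one_left hx ht.2⟩
      · exact ⟨mul_nonneg hu.1 hx, mul_le_of_le_one_left hx hu.2⟩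
  have hsum : ∑ k ∈ s, b k = (∑ k ∈ s, a k * x ^ k) / N := by simpa using hb 1
  exact (le_div_iff₀ hN).1 (hsum ▸ hCle b hbmem)

end SumMulPow

theorem stmt0_general (m : ℕ) (r : ℝ) :
    ∃ C : ℝ, 0 < C ∧ ∀ a : ℕ → ℝ,
      (∀ x ∈ Icc (0:ℝ) r,
        0 ≤ deriv (deriv (fun y : ℝ => ∑ k ∈ Finset.Icc 2 m, a k * y ^ k)) x) →
      ∀ x ∈ Icc (0:ℝ) r,
        C * ∑ k ∈ Finset.Icc 2 m, |a k| * x ^ k ≤ ∑ k ∈ Finset.Icc 2 m, a k * x ^ k := by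
  obtain ⟨C, hC, hbound⟩ := exists_pos_mul_sum_abs_le_of_monotoneOn (s := Finset.Icc 2 m)
    (by simp)
  refine ⟨C, hC, fun a hconv x hx => hbound a x hx.1 ?_⟩
  exact (monotoneOn_sum_mul_pow_of_deriv2_nonneg (fun k hk => (Finset.mem_Icc.1 hk).1)
    hconv).mono (Icc_subset_Icc_right hx.2)

/-- Bruna–Nagel–Wainger lemma: for convex polynomials `f = Σ_{k=2}^m aₖ xᵏ` on `[0, r]`,
`f(x) ≥ C Σ |aₖ| xᵏ` with `C` depending only on `m` and `r`. -/
theorem stmt0 (m : ℕ) (hm : 2 ≤ m) (r : ℝ) (hr : 0 < r) :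
    ∃ C : ℝ, 0 < C ∧ ∀ a : ℕ → ℝ,
      (∀ x ∈ Icc (0:ℝ) r,
        0 ≤ deriv (deriv (fun y : ℝ => ∑ k ∈ Finset.Icc 2 m, a k * y ^ k)) x) →
      ∀ x ∈ Icc (0:ℝ) r,
        C * ∑ k ∈ Finset.Icc 2 m, |a k| * x ^ k ≤ ∑ k ∈ Finset.Icc 2 m, a k * x ^ k :=
  stmt0_general m r
end
end

section
/- Let u : 𝔻 → ℝ be a function on the unit disc 𝔻 ⊂ ℂ such that (1) u(0) = 0 and u is C² near 0, (2) 0 ≤ u(z) ≤ 1 for all z ∈ 𝔻, and (3) z ↦ u(z)/|z|² is subharmonic on 𝔻. Then ∂²u/∂z∂z̄ (0) ≤ 1. -/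
/-!
Since `u ≥ 0 = u 0`, the origin is a critical point of `u`, and Taylor's formula gives
`u z = O(‖z‖²)`, so `v = u / ‖·‖²` is bounded above near the puncture. Adding `η log ‖z‖` makes `v`
tend to `-∞` there, so the maximum principle on the annuli `δ ≤ ‖z‖ ≤ R` applies; letting
`η → 0` and then `R → 1` gives `v ≤ 1`, i.e. `u z ≤ ‖z‖²` on the disc. Hence `t ↦ t² - u (t • e)`
has a local minimum at `0` for every unit vector `e`, so the second derivatives of `u` at `0` in
the directions `1` and `I` are at most `2`; `∂²u/∂z∂z̄ (0)` is a quarter of their sum.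
-/

open Complex Metric Set Filter Asymptotics

noncomputable section

open scoped Topology
open Real (circleAverage)

theorem le_of_forall_pos_le_add_mul {a b k : ℝ} (h : ∀ ε > 0, a ≤ b + ε * k) : a ≤ b := by
  have hlim : Tendsto (fun ε => b + ε * k) (𝓝[>] 0) (𝓝 b) :=
    ((Continuous.tendsto' (by fun_prop) 0 b (by simp))).mono_left nhdsWithin_le_nhds
  exact ge_of_tendsto hlim (eventually_nhdsWithin_of_forall h)

section Taylor

variable {E F : Type*} [NormedAddCommGroup E] [NormedSpace ℝ E]
  [NormedAddCommGroup F] [NormedSpace ℝ F] {f : E → F} {x : E}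

theorem ContDiffAt.isLittleO_taylor_two (hf : ContDiffAt ℝ 2 f x) :
    (fun y => f y - f x - fderiv ℝ f x (y - x) -
        (2:ℝ)⁻¹ • fderiv ℝ (fderiv ℝ f) x (y - x) (y - x))
      =o[𝓝 x] fun y => ‖y - x‖ ^ 2 := by
  set B := fderiv ℝ (fderiv ℝ f) x
  have hB : HasFDerivAt (fderiv ℝ f) B x :=
    ((hf.fderiv_right (m := 1) le_rfl).differentiableAt one_ne_zero).hasFDerivAt
  have hsymm : ∀ v w, B v w = B w v := hf.isSymmSndFDerivAt (by simp)
  obtain ⟨r, hr, hdiff⟩ : ∃ r > 0, ∀ y ∈ ball x r, DifferentiableAt ℝ f y :=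
    Metric.eventually_nhds_iff_ball.1 <|
      (hf.eventually (by simp)).mono fun y hy => hy.differentiableAt two_ne_zero
  have hderiv : ∀ y ∈ ball x r, HasFDerivWithinAt
      (fun y => f y - f x - fderiv ℝ f x (y - x) - (2:ℝ)⁻¹ • B (y - x) (y - x))
      (fderiv ℝ f y - fderiv ℝ f x - B (y - x)) (ball x r) y := by
    intro y hy
    have hsub : HasFDerivAt (fun y => y - x) (ContinuousLinearMap.id ℝ E) y :=
      (hasFDerivAt_id y).sub_const x
    have hquad := (B.hasFDerivAt.comp y hsub).clm_apply hsub
    refine ((((hdiff y hy).hasFDerivAt.sub_const _).sub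
      ((fderiv ℝ f x).hasFDerivAt.comp y hsub)).sub (hquad.const_smul _)).hasFDerivWithinAt
      |>.congr_fderiv ?_
    ext w
    simp [hsymm w]
    module
  have hsmall : (fun y => fderiv ℝ f y - fderiv ℝ f x - B (y - x))
      =o[𝓝[ball x r] x] fun y => ‖y - x‖ ^ 1 := by
    simpa using (hB.isLittleO.norm_right).mono nhdsWithin_le_nhds
  simpa [nhdsWithin_eq_nhds.2 (ball_mem_nhds x hr)] using
    (convex_ball x r).isLittleO_pow_succ (mem_ball_self hr) hderiv hsmall


theorem ContDiffAt.isBigO_sub_of_fderiv_eq_zero (hf : ContDiffAt ℝ 2 f x)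
    (hx : fderiv ℝ f x = 0) : (fun y => f y - f x) =O[𝓝 x] fun y => ‖y - x‖ ^ 2 := by
  set B := fderiv ℝ (fderiv ℝ f) x
  have hquad : (fun y => (2:ℝ)⁻¹ • B (y - x) (y - x)) =O[𝓝 x] fun y => ‖y - x‖ ^ 2 :=
    .of_bound (2⁻¹ * ‖B‖) <| .of_forall fun y => by
      rw [norm_smul, Real.norm_eq_abs, abs_of_pos (by norm_num), norm_pow, norm_norm, mul_assoc]
      gcongr
      exact (B.le_opNorm₂ _ _).trans_eq (by ring)
  refine (hf.isLittleO_taylor_two.isBigO.add hquad).congr_left fun y => ?_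
  simp only [hx, zero_apply, sub_zero, sub_add_cancel, B]

theorem ContDiffAt.fderiv_fderiv_apply_le {f : E → ℝ} {c : ℝ} (hf : ContDiffAt ℝ 2 f x)
    (hx : fderiv ℝ f x = 0) (hle : ∀ᶠ y in 𝓝 x, f y - f x ≤ c * ‖y - x‖ ^ 2) (v : E) :
    fderiv ℝ (fderiv ℝ f) x v v ≤ 2 * c * ‖v‖ ^ 2 := by
  refine le_of_forall_pos_le_add_mul (k := 2 * ‖v‖ ^ 2) fun ε hε => ?_
  have hline : Tendsto (fun t : ℝ => x + t • v) (𝓝[≠] 0) (𝓝 x) :=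
    ((Continuous.tendsto' (by fun_prop) 0 x (by simp))).mono_left nhdsWithin_le_nhds
  obtain ⟨t, ⟨hfle, htaylor⟩, ht0 : t ≠ 0⟩ :=
    ((hline.eventually (hle.and (hf.isLittleO_taylor_two.def hε))).and
      self_mem_nhdsWithin).exists
  have ht2 : 0 < t ^ 2 := by positivity
  simp only [add_sub_cancel_left, hx, zero_apply, mul_zero, sub_zero, map_smul,
    smul_apply, smul_eq_mul, norm_smul, Real.norm_eq_abs, sq_abs, mul_pow,
    abs_of_nonneg (by positivity : (0:ℝ) ≤ t ^ 2 * ‖v‖ ^ 2)] at hfle htaylor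
  have hlow := (abs_le.1 htaylor).1
  refine le_of_mul_le_mul_left ?_ ht2
  nlinarith

end Taylor

theorem circleAverage_norm_sq (c : ℂ) (r : ℝ) :
    circleAverage (fun y => ‖y‖ ^ 2) c r = ‖c‖ ^ 2 + r ^ 2 := by
  -- on the circle, `‖y‖ ^ 2` is the real part of a complex-affine function of `y`
  set g : ℂ → ℂ := fun y => ((r ^ 2 - ‖c‖ ^ 2 : ℝ) : ℂ) + 2 * (starRingEnd ℂ c * y)
  have hsphere : EqOn (fun y => ‖y‖ ^ 2) (reCLM ∘ g) (sphere c |r|) := by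
    intro y hy
    show ‖y‖ ^ 2 = (((r ^ 2 - ‖c‖ ^ 2 : ℝ) : ℂ) + 2 * (starRingEnd ℂ c * y)).re
    rw [← sq_abs r, ← mem_sphere_iff_norm.1 hy]
    simp only [add_re, ofReal_re, mul_re, conj_re, conj_im,
      re_ofNat, im_ofNat, Complex.sq_norm, normSq_apply, sub_re, sub_im]
    ring
  have hg : Differentiable ℂ g := by fun_prop
  rw [Real.circleAverage_congr_sphere hsphere, reCLM.circleAverage_comp_comm
    (hg.continuous.continuousOn.circleIntegrable'), hg.diffContOnCl.circleAverage]
  simp only [reCLM_apply, g, add_re, ofReal_re, mul_re, conj_re, conj_im,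
      re_ofNat, im_ofNat, Complex.sq_norm, normSq_apply]
  ring

theorem frontier_closedBall_diff_ball_subset {X : Type*} [PseudoMetricSpace X] (c : X)
    (δ R : ℝ) : frontier (closedBall c R \ ball c δ) ⊆ sphere c δ ∪ sphere c R := by
  rw [sdiff_eq]
  intro y hy
  rcases frontier_inter_subset _ _ hy with ⟨hR, -⟩ | ⟨-, hδ⟩
  · exact Or.inr (frontier_closedBall_subset_sphere hR)
  · exact Or.inl (frontier_ball_subset_sphere (frontier_compl (ball c δ) ▸ hδ))

theorem subharmonicOn_iff_le_circleAverage {u : ℂ → ℝ} {s : Set ℂ} :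
    SubharmonicOn u s ↔ ContinuousOn u s ∧
    ∀ z r, 0 < r → closedBall z r ⊆ s → u z ≤ circleAverage u z r := Iff.rfl

theorem subharmonicOn_log_norm {s : Set ℂ} (hs : (0:ℂ) ∉ s) :
    SubharmonicOn (fun z => Real.log ‖z‖) s := by
  have hne : ∀ z ∈ s, ‖z‖ ≠ 0 := fun z hz => norm_ne_zero_iff.2 (ne_of_mem_of_not_mem hz hs)
  refine subharmonicOn_iff_le_circleAverage.2 ⟨continuous_norm.continuousOn.log hne,
    fun z r hr hzs => ?_⟩
  have hz := hne z (hzs (mem_closedBall_self hr.le))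
  have havg := circleAverage_log_norm_sub_const_eq_log_radius_add_posLog (c := z) (a := 0) hr.ne'
  simp only [sub_zero] at havg
  rw [havg, Real.posLog_apply, Real.log_mul (inv_ne_zero hr.ne') hz, Real.log_inv]
  linarith [le_max_right 0 (-Real.log r + Real.log ‖z‖)]

namespace SubharmonicOn

variable {u v : ℂ → ℝ} {s t : Set ℂ} {z : ℂ} {r ε : ℝ}

theorem mono (hu : SubharmonicOn u s) (hts : t ⊆ s) : SubharmonicOn u t :=
  ⟨hu.1.mono hts, fun z r hr hz => hu.2 z r hr (hz.trans hts)⟩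

theorem le_circleAverage (hu : SubharmonicOn u s) (hr : 0 < r) (hs : closedBall z r ⊆ s) :
    u z ≤ circleAverage u z r :=
  hu.2 z r hr hs

theorem circleIntegrable (hu : SubharmonicOn u s) (hr : 0 < r) (hs : closedBall z r ⊆ s) :
    CircleIntegrable u z r :=
  (hu.1.mono (sphere_subset_closedBall.trans hs)).circleIntegrable hr.le

theorem add (hu : SubharmonicOn u s) (hv : SubharmonicOn v s) :
    SubharmonicOn (fun z => u z + v z) s :=
  subharmonicOn_iff_le_circleAverage.2 ⟨hu.1.add hv.1, fun z r hr hs => by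
    rw [Real.circleAverage_fun_add (hu.circleIntegrable hr hs) (hv.circleIntegrable hr hs)]
    exact add_le_add (hu.le_circleAverage hr hs) (hv.le_circleAverage hr hs)⟩

theorem const_mul (hu : SubharmonicOn u s) {c : ℝ} (hc : 0 ≤ c) :
    SubharmonicOn (fun z => c * u z) s :=
  subharmonicOn_iff_le_circleAverage.2 ⟨continuousOn_const.mul hu.1, fun z r hr hs => by
    rw [show (fun z => c * u z) = fun z => c • u z from rfl, Real.circleAverage_fun_smul,
      smul_eq_mul]
    exact mul_le_mul_of_nonneg_left (hu.le_circleAverage hr hs) hc⟩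

theorem not_isMaxOn_add_norm_sq (hu : SubharmonicOn u s) (hε : 0 < ε) (hr : 0 < r)
    (hs : closedBall z r ⊆ s) :
    ¬ IsMaxOn (fun y => u y + ε * ‖y‖ ^ 2) (closedBall z r) z := by
  intro hmax
  have hsq : CircleIntegrable (fun y => ε * ‖y‖ ^ 2) z r :=
    (by fun_prop : Continuous fun y : ℂ => ε * ‖y‖ ^ 2).continuousOn.circleIntegrable'
  have havg : circleAverage (fun y => u y + ε * ‖y‖ ^ 2) z r ≤ u z + ε * ‖z‖ ^ 2 :=
    Real.circleAverage_mono_on_of_le_circle ((hu.circleIntegrable hr hs).add hsq)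
      fun y hy => hmax (sphere_subset_closedBall (abs_of_pos hr ▸ hy))
  rw [Real.circleAverage_fun_add (hu.circleIntegrable hr hs) hsq,
    show (fun y => ε * ‖y‖ ^ 2) = fun y => ε • ‖y‖ ^ 2 from rfl, Real.circleAverage_fun_smul,
    circleAverage_norm_sq, smul_eq_mul] at havg
  nlinarith [hu.le_circleAverage hr hs, mul_pos hε (pow_pos hr 2)]

theorem le_of_forall_mem_frontier_le (hu : SubharmonicOn u s) {K : Set ℂ} (hK : IsCompact K)
    (hKs : K ⊆ s) {M : ℝ} (hM : ∀ y ∈ frontier K, u y ≤ M) (hz : z ∈ K) : u z ≤ M := by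
  obtain ⟨ρ, hρ⟩ := hK.isBounded.subset_closedBall 0
  refine le_of_forall_pos_le_add_mul (k := ρ ^ 2) fun ε hε => ?_
  obtain ⟨y, hyK, hmax⟩ := hK.exists_isMaxOn ⟨z, hz⟩
    ((hu.1.mono hKs).add (by fun_prop : Continuous fun y : ℂ => ε * ‖y‖ ^ 2).continuousOn)
  have hy : y ∈ frontier K := by
    refine ⟨subset_closure hyK, fun hint => ?_⟩
    obtain ⟨r, hr, hrK⟩ := nhds_basis_closedBall.mem_iff.1 (mem_interior_iff_mem_nhds.1 hint)
    exact hu.not_isMaxOn_add_norm_sq hε hr (hrK.trans hKs) (hmax.on_subset hrK)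
  have hyρ : ‖y‖ ≤ ρ := mem_closedBall_zero_iff.1 (hρ hyK)
  calc u z ≤ u z + ε * ‖z‖ ^ 2 := le_add_of_nonneg_right (by positivity)
    _ ≤ u y + ε * ‖y‖ ^ 2 := hmax hz
    _ ≤ M + ε * ρ ^ 2 := by gcongr; exact hM y hy

theorem le_of_forall_mem_sphere_le {C M R : ℝ}
    (hv : SubharmonicOn v (closedBall 0 R \ {0})) (hbdd : ∀ᶠ y in 𝓝[≠] 0, v y ≤ C)
    (hM : ∀ y ∈ sphere 0 R, v y ≤ M) (hz0 : z ≠ 0) (hzR : ‖z‖ ≤ R) : v z ≤ M := by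
  have hz : 0 < ‖z‖ := norm_pos_iff.2 hz0
  have hR : 0 < R := hz.trans_le hzR
  -- `v + η log ‖·‖` tends to `-∞` at the puncture, so the maximum principle applies on thin annuli
  refine le_of_forall_pos_le_add_mul (k := Real.log R - Real.log ‖z‖) fun η hη => ?_
  obtain ⟨ρ, hρ, hρC⟩ := Metric.mem_nhdsWithin_iff.1 hbdd
  set δ := min (min (ρ / 2) ‖z‖) (R * Real.exp ((M - C) / η))
  have hδ : 0 < δ := by positivity
  have hδz : δ ≤ ‖z‖ := (min_le_left _ _).trans (min_le_right _ _)
  have hlogδ : η * Real.log δ ≤ η * Real.log R + (M - C) := by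
    have := Real.log_le_log hδ (min_le_right _ _)
    rw [Real.log_mul hR.ne' (Real.exp_pos _).ne', Real.log_exp] at this
    calc η * Real.log δ ≤ η * (Real.log R + (M - C) / η) := by gcongr
      _ = η * Real.log R + (M - C) := by field_simp
  have hw := hv.add ((subharmonicOn_log_norm (s := closedBall 0 R \ {0}) (by simp)).const_mul hη.le)
  have hann : closedBall (0:ℂ) R \ ball 0 δ ⊆ closedBall 0 R \ {0} :=
    sdiff_subset_sdiff_right (singleton_subset_iff.2 (mem_ball_self hδ))
  have := hw.le_of_forall_mem_frontier_le ((isCompact_closedBall 0 R).diff isOpen_ball) hann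
    (M := M + η * Real.log R) ?_ ⟨mem_closedBall_zero_iff.2 hzR, by simpa using hδz⟩
  · linarith
  intro y hy
  rcases frontier_closedBall_diff_ball_subset 0 δ R hy with hy | hy <;>
    rw [mem_sphere_zero_iff_norm] at hy <;> rw [hy]
  · have hyρ : ‖y‖ < ρ := hy ▸ ((min_le_left _ _).trans (min_le_left _ _)).trans_lt (by linarith)
    have hy0 : y ≠ 0 := norm_pos_iff.1 (hy ▸ hδ)
    have hyC : v y ≤ C := hρC ⟨mem_ball_zero_iff.2 hyρ, hy0⟩
    linarith
  · linarith [hM y (mem_sphere_zero_iff_norm.2 hy)]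

end SubharmonicOn

theorem le_norm_sq_of_subharmonicOn_div_norm_sq {u : ℂ → ℝ} {C : ℝ} {z : ℂ}
    (hsub : SubharmonicOn (fun z => u z / ‖z‖ ^ 2) (ball 0 1 \ {0}))
    (hbdd : ∀ᶠ y in 𝓝[≠] 0, u y / ‖y‖ ^ 2 ≤ C) (hle : ∀ y ∈ ball (0:ℂ) 1, u y ≤ 1)
    (hz : z ∈ ball (0:ℂ) 1) (hz0 : z ≠ 0) : u z ≤ ‖z‖ ^ 2 := by
  have hz1 : ‖z‖ < 1 := mem_ball_zero_iff.1 hz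
  have hR : ∀ R ∈ Ioo ‖z‖ 1, u z / ‖z‖ ^ 2 ≤ 1 / R ^ 2 := fun R ⟨hzR, hR1⟩ =>
    (hsub.mono (sdiff_subset_sdiff_left (closedBall_subset_ball hR1))).le_of_forall_mem_sphere_le
      hbdd (fun y hy => by
        rw [mem_sphere_zero_iff_norm.1 hy]
        gcongr
        exact hle y (mem_ball_zero_iff.2 (mem_sphere_zero_iff_norm.1 hy ▸ hR1)))
      hz0 hzR.le
  have hlim : Tendsto (fun R : ℝ => 1 / R ^ 2) (𝓝[<] 1) (𝓝 1) := by
    have hcont : ContinuousAt (fun R : ℝ => 1 / R ^ 2) 1 := by fun_prop (disch := norm_num)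
    simpa using hcont.tendsto.mono_left nhdsWithin_le_nhds
  have := ge_of_tendsto hlim (mem_of_superset (Ioo_mem_nhdsLT hz1) hR)
  rwa [div_le_one (by positivity)] at this

theorem mixedDeriv_eq_fderiv_fderiv {u : ℂ → ℝ} {z : ℂ}
    (hu : DifferentiableAt ℝ (fderiv ℝ u) z) :
    mixedDeriv u z = (1 / 4) * (fderiv ℝ (fderiv ℝ u) z 1 1 + fderiv ℝ (fderiv ℝ u) z I I) := by
  simp [mixedDeriv, fderiv_clm_apply hu (differentiableAt_const _)]

/-- One-variable Schwarz-type lemma: if `u` is C² near 0 with `u 0 = 0`, `0 ≤ u ≤ 1`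
on the unit disc, and `u(z)/|z|²` is subharmonic there, then `∂²u/∂z∂z̄(0) ≤ 1`. -/
theorem stmt1 (u : ℂ → ℝ) (hC2 : ContDiffAt ℝ 2 u 0) (h0 : u 0 = 0)
    (hb : ∀ z ∈ ball (0:ℂ) 1, 0 ≤ u z ∧ u z ≤ 1)
    (hsub : SubharmonicOn (fun z => u z / ‖z‖ ^ 2) (ball (0:ℂ) 1 \ {0})) :
    mixedDeriv u 0 ≤ 1 := by
  have hmin : IsLocalMin u 0 :=
    mem_of_superset (ball_mem_nhds 0 one_pos) fun z hz => h0 ▸ (hb z hz).1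
  have hDu : fderiv ℝ u 0 = 0 := hmin.fderiv_eq_zero
  obtain ⟨C, hC⟩ := (hC2.isBigO_sub_of_fderiv_eq_zero hDu).bound
  have hbdd : ∀ᶠ y in 𝓝[≠] 0, u y / ‖y‖ ^ 2 ≤ C := by
    filter_upwards [nhdsWithin_le_nhds hC, self_mem_nhdsWithin] with y hy (hy0 : y ≠ 0)
    rw [div_le_iff₀ (by positivity)]
    simpa [h0] using (le_abs_self _).trans hy
  have hle : ∀ z ∈ ball (0:ℂ) 1, u z ≤ ‖z‖ ^ 2 := fun z hz => by
    rcases eq_or_ne z 0 with rfl | hz0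
    · simp [h0]
    · exact le_norm_sq_of_subharmonicOn_div_norm_sq hsub hbdd (fun y hy => (hb y hy).2) hz hz0
  have hsecond : ∀ e : ℂ, ‖e‖ = 1 → fderiv ℝ (fderiv ℝ u) 0 e e ≤ 2 := fun e he => by
    simpa [he] using hC2.fderiv_fderiv_apply_le (c := 1) hDu
      (mem_of_superset (ball_mem_nhds 0 one_pos) fun y hy => by simpa [h0] using hle y hy) e
  rw [mixedDeriv_eq_fderiv_fderiv ((hC2.fderiv_right (m := 1) le_rfl).differentiableAt one_ne_zero)]
  linarith [hsecond 1 (by simp), hsecond I (by simp)]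
end
end
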